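/- arXiv:2604.07636 — 6 statements merged into one kernel-verified Lean document; each statement's English description precedes it below -/
import Mathlib

section
/- Let (Ω, ℱ, P) be a probability space and U a finite set of size N ≥ 1 partitioned into disjoint nonempty folds U_1, …, U_K of sizes N_1, …, N_K. Let (I_i)_{i∈U} be mutually independent {0,1}-valued random variables with E[I_i] = π_i ≥ π_min > 0. For each fold k, let (W_i^{(k)})_{i∈U_k} be square-integrable real random variables measurable with respect to the σ-algebra 𝒢_k generated by (I_j)_{j∈U∖U_k}. Define R_N = Σ_{k=1}^K Σ_{i∈U_k} (1 − I_i/π_i) W_i^{(k)}. Then E[ (R_N/N)² ] ≤ (K/(π_min N)) · E[ max_{1≤k≤K} (1/N_k) Σ_{i∈U_k} (W_i^{(k)})² ]. -/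
open MeasureTheory ProbabilityTheory Finset
open scoped ENNReal

/-!
Write `a i = 1 - I i / π i` for the Horvitz–Thompson error of unit `i`: the `a i` are independent
and centred, with `E[(a i)²] = (π i)⁻¹ - 1 ≤ πmin⁻¹`. In fold `k` the `W k i` depend only on the
indicators outside the fold, so for `i, j` in the fold `a i * a j` is independent of
`W k i * W k j` and the cross terms of `E[(∑ i ∈ fold k, a i * W k i)²]` vanish. This bounds the
second moment of the fold sum by `πmin⁻¹ * N_k * E[fold mean of W²]`. Cauchy–Schwarz over the `K`
folds costs a factor `K`, each fold mean is at most their maximum, and `∑ k, N_k ≤ N`.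
-/

section

variable {Ω : Type*} {mΩ : MeasurableSpace Ω} {P : Measure Ω}

section Independence

variable {ι : Type*}

lemma integral_mul_eq_mul_integral_of_indep {m₁ m₂ : MeasurableSpace Ω} (h : Indep m₁ m₂ P)
    (hm₁ : m₁ ≤ mΩ) (hm₂ : m₂ ≤ mΩ) {f g : Ω → ℝ} (hf : Measurable[m₁] f)
    (hg : Measurable[m₂] g) :
    ∫ ω, f ω * g ω ∂P = (∫ ω, f ω ∂P) * ∫ ω, g ω ∂P := by
  have hfg : IndepFun f g P := (IndepFun_iff_Indep f g P).2 <|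
    indep_of_indep_of_le_right (indep_of_indep_of_le_left h hf.comap_le) hg.comap_le
  exact hfg.integral_fun_mul_eq_mul_integral (hf.mono hm₁ le_rfl).aestronglyMeasurable
    (hg.mono hm₂ le_rfl).aestronglyMeasurable

lemma indep_sup_iSup_of_notMem {m : ι → MeasurableSpace Ω} (hm : ∀ i, m i ≤ mΩ)
    (hind : iIndep m P) {S : Set ι} {i j : ι} (hi : i ∉ S) (hj : j ∉ S) :
    Indep (m i ⊔ m j) (⨆ l ∈ S, m l) P := by
  have hdisj : Disjoint ({i, j} : Set ι) S := by
    simp [Set.disjoint_insert_left, Set.disjoint_singleton_left, hi, hj]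
  simpa only [iSup_pair] using indep_iSup_of_disjoint hm hind hdisj

lemma integral_sq_sum_mul_eq_of_iIndep [IsProbabilityMeasure P] {m : ι → MeasurableSpace Ω}
    (hm : ∀ i, m i ≤ mΩ) (hind : iIndep m P) {T : Finset ι} {S : Set ι}
    (hTS : ∀ i ∈ T, i ∉ S) {a V : ι → Ω → ℝ} (ha : ∀ i ∈ T, Measurable[m i] (a i))
    (haL : ∀ i ∈ T, MemLp (a i) ∞ P) (ha0 : ∀ i ∈ T, ∫ ω, a i ω ∂P = 0)
    (hV : ∀ i ∈ T, Measurable[⨆ j ∈ S, m j] (V i)) (hVL : ∀ i ∈ T, MemLp (V i) 2 P) :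
    ∫ ω, (∑ i ∈ T, a i ω * V i ω) ^ 2 ∂P
      = ∑ i ∈ T, (∫ ω, a i ω ^ 2 ∂P) * ∫ ω, V i ω ^ 2 ∂P := by
  have hcross : ∀ i ∈ T, ∀ j ∈ T, ∫ ω, a i ω * V i ω * (a j ω * V j ω) ∂P
      = (∫ ω, a i ω * a j ω ∂P) * ∫ ω, V i ω * V j ω ∂P := fun i hi j hj => by
    rw [← integral_mul_eq_mul_integral_of_indep (f := fun ω => a i ω * a j ω)
      (g := fun ω => V i ω * V j ω) (indep_sup_iSup_of_notMem hm hind (hTS i hi) (hTS j hj))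
      (sup_le (hm i) (hm j)) (iSup₂_le fun l _ => hm l)
      (((ha i hi).mono le_sup_left le_rfl).mul ((ha j hj).mono le_sup_right le_rfl))
      ((hV i hi).mul (hV j hj))]
    congr 1 with ω
    ring
  have horth : ∀ i ∈ T, ∀ j ∈ T, i ≠ j → ∫ ω, a i ω * a j ω ∂P = 0 := fun i hi j hj hij => by
    rw [integral_mul_eq_mul_integral_of_indep (hind.indep hij) (hm i) (hm j) (ha i hi) (ha j hj),
      ha0 i hi, zero_mul]
  have haV : ∀ i ∈ T, MemLp (fun ω => a i ω * V i ω) 2 P := fun i hi =>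
    (hVL i hi).mul' (haL i hi)
  have hint : ∀ i ∈ T, ∀ j ∈ T,
      Integrable (fun ω => a i ω * V i ω * (a j ω * V j ω)) P := fun i hi j hj =>
    (haV i hi).integrable_mul (haV j hj)
  calc ∫ ω, (∑ i ∈ T, a i ω * V i ω) ^ 2 ∂P
      = ∫ ω, ∑ i ∈ T, ∑ j ∈ T, a i ω * V i ω * (a j ω * V j ω) ∂P := by
        simp_rw [sq, sum_mul_sum]
    _ = ∑ i ∈ T, ∑ j ∈ T, ∫ ω, a i ω * V i ω * (a j ω * V j ω) ∂P := by
        rw [integral_finsetSum _ fun i hi => integrable_finsetSum _ (hint i hi)]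
        exact sum_congr rfl fun i hi => integral_finsetSum _ (hint i hi)
    _ = ∑ i ∈ T, ∫ ω, a i ω * V i ω * (a i ω * V i ω) ∂P :=
        sum_congr rfl fun i hi => sum_eq_single_of_mem i hi fun j hj hji => by
          rw [hcross i hi j hj, horth i hi j hj hji.symm, zero_mul]
    _ = ∑ i ∈ T, (∫ ω, a i ω ^ 2 ∂P) * ∫ ω, V i ω ^ 2 ∂P :=
        sum_congr rfl fun i hi => by simp only [hcross i hi i hi, sq]

end Independence

section HorvitzThompson

variable {I : Ω → ℝ} {p : ℝ}

lemma memLp_top_of_zero_or_one (hI : Measurable I) (h01 : ∀ ω, I ω = 0 ∨ I ω = 1) :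
    MemLp I ∞ P :=
  memLp_top_of_bound hI.aestronglyMeasurable 1 <| ae_of_all _ fun ω => by
    rcases h01 ω with h | h <;> simp [h]

lemma memLp_top_one_sub_div (hI : Measurable I) (h01 : ∀ ω, I ω = 0 ∨ I ω = 1) (p : ℝ) :
    MemLp (fun ω => 1 - I ω / p) ∞ P := by
  simpa only [div_eq_mul_inv, Pi.sub_def] using
    (memLp_top_const 1).sub ((memLp_top_of_zero_or_one hI h01).mul_const p⁻¹)

variable [IsProbabilityMeasure P]

lemma integral_one_sub_div_eq_zero (hI : Integrable I P) (hp : p ≠ 0) (hEI : ∫ ω, I ω ∂P = p) :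
    ∫ ω, (1 - I ω / p) ∂P = 0 := by
  rw [integral_sub (integrable_const 1) (hI.div_const p), integral_div, hEI, div_self hp]
  simp

lemma integral_one_sub_div_sq (hI : Integrable I P) (h01 : ∀ ω, I ω = 0 ∨ I ω = 1) (hp : p ≠ 0)
    (hEI : ∫ ω, I ω ∂P = p) :
    ∫ ω, (1 - I ω / p) ^ 2 ∂P = p⁻¹ - 1 := by
  have hsq : (fun ω => (1 - I ω / p) ^ 2) = fun ω => 1 - (2 / p - (p ^ 2)⁻¹) * I ω := by
    funext ω
    rcases h01 ω with h | h <;> simp only [h] <;> field_simp <;> ring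
  rw [hsq, integral_sub (integrable_const 1) (hI.const_mul _), integral_const_mul, hEI]
  simp only [integral_const, probReal_univ, smul_eq_mul, one_mul]
  field_simp
  ring

end HorvitzThompson

lemma integral_sq_sum_one_sub_div_mul_le {ι : Type*} [IsProbabilityMeasure P] {I : ι → Ω → ℝ}
    (hImeas : ∀ i, Measurable (I i)) (hI01 : ∀ i ω, I i ω = 0 ∨ I i ω = 1)
    {π : ι → ℝ} {πmin : ℝ} (hπmin : 0 < πmin) (hπlo : ∀ i, πmin ≤ π i)
    (hEI : ∀ i, ∫ ω, I i ω ∂P = π i) (hind : iIndepFun I P) {T : Finset ι} {S : Set ι}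
    (hTS : ∀ i ∈ T, i ∉ S) {V : ι → Ω → ℝ}
    (hV : ∀ i ∈ T, Measurable[⨆ j ∈ S, MeasurableSpace.comap (I j) inferInstance] (V i))
    (hVL : ∀ i ∈ T, MemLp (V i) 2 P) :
    ∫ ω, (∑ i ∈ T, (1 - I i ω / π i) * V i ω) ^ 2 ∂P
      ≤ πmin⁻¹ * ∑ i ∈ T, ∫ ω, V i ω ^ 2 ∂P := by
  have hπ : ∀ i, π i ≠ 0 := fun i => (hπmin.trans_le (hπlo i)).ne'
  have hIint : ∀ i, Integrable (I i) P := fun i =>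
    (memLp_top_of_zero_or_one (hImeas i) (hI01 i)).integrable le_top
  rw [integral_sq_sum_mul_eq_of_iIndep (fun i => (hImeas i).comap_le) hind.iIndep hTS
    (fun i _ => ((comap_measurable (I i)).div_const (π i)).const_sub 1)
    (fun i _ => memLp_top_one_sub_div (hImeas i) (hI01 i) (π i))
    (fun i _ => integral_one_sub_div_eq_zero (hIint i) (hπ i) (hEI i)) hV hVL, mul_sum]
  refine sum_le_sum fun i _ => mul_le_mul_of_nonneg_right ?_ (integral_nonneg fun _ => sq_nonneg _)
  rw [integral_one_sub_div_sq (hIint i) (hI01 i) (hπ i) (hEI i)]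
  linarith [inv_anti₀ hπmin (hπlo i)]

section Aggregation

variable {ι κ : Type*}

lemma integral_sq_sum_le_card_mul_sum_integral_sq (s : Finset κ) {f : κ → Ω → ℝ}
    (hf : ∀ k ∈ s, MemLp (f k) 2 P) :
    ∫ ω, (∑ k ∈ s, f k ω) ^ 2 ∂P ≤ #s * ∑ k ∈ s, ∫ ω, f k ω ^ 2 ∂P := by
  have hsq : ∀ k ∈ s, Integrable (fun ω => f k ω ^ 2) P := fun k hk => (hf k hk).integrable_sq
  rw [← integral_finsetSum s hsq, ← integral_const_mul]
  exact integral_mono_of_nonneg (ae_of_all _ fun _ => sq_nonneg _)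
    ((integrable_finsetSum s hsq).const_mul _) (ae_of_all _ fun _ => sq_sum_le_card_mul_sum_sq)

lemma integrable_iSup_of_nonneg [Fintype κ] {g : κ → Ω → ℝ} (hg : ∀ k, Integrable (g k) P)
    (hg0 : ∀ k ω, 0 ≤ g k ω) : Integrable (fun ω => ⨆ k, g k ω) P := by
  refine (integrable_finsetSum univ fun k _ => hg k).mono'
    (AEMeasurable.iSup fun k => (hg k).aemeasurable).aestronglyMeasurable (ae_of_all _ fun ω => ?_)
  rw [Real.norm_of_nonneg (Real.iSup_nonneg fun k => hg0 k ω)]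
  exact Real.iSup_le (fun k => single_le_sum (fun l _ => hg0 l ω) (mem_univ k))
    (sum_nonneg fun l _ => hg0 l ω)

lemma sum_sum_integral_le_mul_integral_iSup_avg [Fintype κ] (s : κ → Finset ι)
    {f : κ → ι → Ω → ℝ} (hf : ∀ k, ∀ i ∈ s k, Integrable (f k i) P)
    (hf0 : ∀ k, ∀ i ∈ s k, ∀ ω, 0 ≤ f k i ω) :
    ∑ k, ∑ i ∈ s k, ∫ ω, f k i ω ∂P
      ≤ (∑ k, (#(s k) : ℝ)) * ∫ ω, ⨆ k, (#(s k) : ℝ)⁻¹ * ∑ i ∈ s k, f k i ω ∂P := by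
  set g : κ → Ω → ℝ := fun k ω => (#(s k) : ℝ)⁻¹ * ∑ i ∈ s k, f k i ω
  have hg : ∀ k, Integrable (g k) P := fun k => (integrable_finsetSum _ (hf k)).const_mul _
  have hg0 : ∀ k ω, 0 ≤ g k ω := fun k ω =>
    mul_nonneg (by positivity) (sum_nonneg fun i hi => hf0 k i hi ω)
  have hsum : ∀ k, ∑ i ∈ s k, ∫ ω, f k i ω ∂P = #(s k) * ∫ ω, g k ω ∂P := fun k => by
    rcases (s k).eq_empty_or_nonempty with hk | hk
    · simp [hk]
    · rw [integral_const_mul, integral_finsetSum _ (hf k)]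
      field_simp [hk.card_pos.ne']
  simp_rw [hsum, sum_mul]
  refine sum_le_sum fun k _ => mul_le_mul_of_nonneg_left ?_ (Nat.cast_nonneg _)
  exact integral_mono (hg k) (integrable_iSup_of_nonneg hg hg0) fun ω =>
    le_ciSup (f := fun l => g l ω) (Set.finite_range _).bddAbove k

end Aggregation

end

theorem poisson_kfold_remainder_bound_general {Ω ι : Type*} [mΩ : MeasurableSpace Ω]
    [Fintype ι] [DecidableEq ι]
    (P : Measure Ω) [IsProbabilityMeasure P]
    (K : ℕ)
    (fold : Fin K → Finset ι)
    (hdisj : ∀ k l : Fin K, k ≠ l → Disjoint (fold k) (fold l))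
    (I : ι → Ω → ℝ) (hImeas : ∀ i, Measurable (I i))
    (hI01 : ∀ i ω, I i ω = 0 ∨ I i ω = 1)
    (π : ι → ℝ) (πmin : ℝ) (hπmin : 0 < πmin) (hπlo : ∀ i, πmin ≤ π i)
    (hEI : ∀ i, ∫ ω, I i ω ∂P = π i)
    (hiIndep : iIndepFun I P)
    (W : Fin K → ι → Ω → ℝ)
    (hWmeas : ∀ k, ∀ i ∈ fold k,
      StronglyMeasurable[⨆ j ∈ Finset.univ \ fold k,
        MeasurableSpace.comap (I j) inferInstance] (W k i))
    (hWL2 : ∀ k, ∀ i ∈ fold k, MemLp (W k i) 2 P) :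
    ∫ ω, ((∑ k, ∑ i ∈ fold k, (1 - I i ω / π i) * W k i ω)
            / (Fintype.card ι : ℝ)) ^ 2 ∂P
      ≤ ((K : ℝ) / (πmin * (Fintype.card ι : ℝ)))
          * ∫ ω, (⨆ k, ((fold k).card : ℝ)⁻¹
              * ∑ i ∈ fold k, (W k i ω) ^ 2) ∂P := by
  have hcard : ∑ k, ((fold k).card : ℝ) ≤ Fintype.card ι := by
    rw [← Nat.cast_sum, ← card_biUnion fun k _ l _ hkl => hdisj k l hkl]
    exact_mod_cast card_le_univ _
  set N : ℝ := (Fintype.card ι : ℝ)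
  set E := ∫ ω, (⨆ k, ((fold k).card : ℝ)⁻¹ * ∑ i ∈ fold k, (W k i ω) ^ 2) ∂P
  have hfoldL2 : ∀ k, MemLp (fun ω => ∑ i ∈ fold k, (1 - I i ω / π i) * W k i ω) 2 P :=
    fun k => memLp_finsetSum _ fun i hi =>
      (hWL2 k i hi).mul' (memLp_top_one_sub_div (hImeas i) (hI01 i) (π i))
  have hfold : ∀ k, ∫ ω, (∑ i ∈ fold k, (1 - I i ω / π i) * W k i ω) ^ 2 ∂P
      ≤ πmin⁻¹ * ∑ i ∈ fold k, ∫ ω, W k i ω ^ 2 ∂P := fun k =>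
    integral_sq_sum_one_sub_div_mul_le hImeas hI01 hπmin hπlo hEI hiIndep (by simp)
      (fun i hi => (hWmeas k i hi).measurable) (hWL2 k)
  have hE : 0 ≤ E := integral_nonneg fun ω => Real.iSup_nonneg fun k =>
    mul_nonneg (by positivity) (sum_nonneg fun _ _ => sq_nonneg _)
  calc ∫ ω, ((∑ k, ∑ i ∈ fold k, (1 - I i ω / π i) * W k i ω) / N) ^ 2 ∂P
      = (∫ ω, (∑ k, ∑ i ∈ fold k, (1 - I i ω / π i) * W k i ω) ^ 2 ∂P) / N ^ 2 := by
        simp_rw [div_pow]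
        exact integral_div _ _
    _ ≤ K * (∑ k, ∫ ω, (∑ i ∈ fold k, (1 - I i ω / π i) * W k i ω) ^ 2 ∂P) / N ^ 2 := by
        gcongr
        simpa using integral_sq_sum_le_card_mul_sum_integral_sq univ fun k _ => hfoldL2 k
    _ ≤ K * (πmin⁻¹ * ∑ k, ∑ i ∈ fold k, ∫ ω, W k i ω ^ 2 ∂P) / N ^ 2 := by
        gcongr
        rw [mul_sum]
        exact sum_le_sum fun k _ => hfold k
    _ ≤ K * (πmin⁻¹ * (N * E)) / N ^ 2 := by
        gcongr
        exact (sum_sum_integral_le_mul_integral_iSup_avg fold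
          (fun k i hi => (hWL2 k i hi).integrable_sq) fun _ _ _ _ => sq_nonneg _).trans
          (mul_le_mul_of_nonneg_right hcard hE)
    _ = K / (πmin * N) * E := by
        -- `N / (N * N) = N⁻¹` holds also at `N = 0`, where both sides are `0`.
        rw [mul_comm N E, ← mul_assoc, ← mul_assoc, mul_div_assoc, sq, div_self_mul_self']
        ring

/-- Mean-square control of the K-fold sample-split remainder under Poisson
sampling. -/
theorem poisson_kfold_remainder_bound {Ω ι : Type*} [mΩ : MeasurableSpace Ω]
    [Fintype ι] [DecidableEq ι]
    (P : Measure Ω) [IsProbabilityMeasure P]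
    (hN : 1 ≤ Fintype.card ι)
    (K : ℕ) (hK : 0 < K)
    (fold : Fin K → Finset ι)
    (hne : ∀ k, (fold k).Nonempty)
    (hdisj : ∀ k l : Fin K, k ≠ l → Disjoint (fold k) (fold l))
    (hcover : Finset.univ.biUnion fold = Finset.univ)
    (I : ι → Ω → ℝ) (hImeas : ∀ i, Measurable (I i))
    (hI01 : ∀ i ω, I i ω = 0 ∨ I i ω = 1)
    (π : ι → ℝ) (πmin : ℝ) (hπmin : 0 < πmin) (hπlo : ∀ i, πmin ≤ π i)
    (hEI : ∀ i, ∫ ω, I i ω ∂P = π i)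
    (hiIndep : iIndepFun I P)
    (W : Fin K → ι → Ω → ℝ)
    (hWmeas : ∀ k, ∀ i ∈ fold k,
      StronglyMeasurable[⨆ j ∈ Finset.univ \ fold k,
        MeasurableSpace.comap (I j) inferInstance] (W k i))
    (hWL2 : ∀ k, ∀ i ∈ fold k, MemLp (W k i) 2 P) :
    ∫ ω, ((∑ k, ∑ i ∈ fold k, (1 - I i ω / π i) * W k i ω)
            / (Fintype.card ι : ℝ)) ^ 2 ∂P
      ≤ ((K : ℝ) / (πmin * (Fintype.card ι : ℝ)))
          * ∫ ω, (⨆ k, ((fold k).card : ℝ)⁻¹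
              * ∑ i ∈ fold k, (W k i ω) ^ 2) ∂P :=
  poisson_kfold_remainder_bound_general (mΩ := mΩ) P K fold hdisj I hImeas hI01 π πmin hπmin hπlo
    hEI hiIndep W hWmeas hWL2
end

section
/- Let U be a finite set, let S be a uniformly distributed random subset of U of fixed size n, and let V ⊆ U. Let B ⊆ U ∖ V satisfy |B| ≤ n and n − |B| ≤ |V|. Then, conditionally on the event {S ∖ V = B} (which has positive probability), the random set S ∩ V is uniformly distributed over all subsets of V of size n − |B|; that is, for every t ⊆ V with |t| = n − |B|, P( S ∩ V = t | S ∖ V = B ) = 1 / C(|V|, n − |B|), where C(·,·) is the binomial coefficient. -/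
open Finset

/-- Conditioning an SRSWOR sample on its realization outside a fold `V` leaves
an SRSWOR sample of the remaining size within `V`. -/
theorem srswor_conditional_uniform {ι : Type*} [DecidableEq ι]
    (U : Finset ι) (n : ℕ) (hn : n ≤ U.card)
    (V : Finset ι) (hV : V ⊆ U)
    (B : Finset ι) (hB : B ⊆ U \ V) (hBn : B.card ≤ n)
    (hnB : n - B.card ≤ V.card) :
    0 < ((U.powersetCard n).filter (fun s => s \ V = B)).card
    ∧ ∀ t ⊆ V, t.card = n - B.card →
        ((((U.powersetCard n).filter (fun s => s \ V = B ∧ s ∩ V = t)).card : ℝ)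
            / (((U.powersetCard n).filter (fun s => s \ V = B)).card : ℝ))
          = ((V.card.choose (n - B.card) : ℝ))⁻¹ := by
  classical
  obtain ⟨hBU, hBV⟩ := Finset.subset_sdiff.mp hB
  set k := n - B.card with hk
  -- membership characterization of B ∪ t
  have hmem : ∀ t : Finset ι, t ⊆ V → t.card = k →
      (B ∪ t ∈ U.powersetCard n ∧ (B ∪ t) \ V = B ∧ (B ∪ t) ∩ V = t) := by
    intro t htV htk
    have hdisj : Disjoint B t := hBV.mono_right htV
    have hcard : (B ∪ t).card = n := by
      rw [Finset.card_union_of_disjoint hdisj, htk, hk]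
      omega
    refine ⟨Finset.mem_powersetCard.mpr ⟨Finset.union_subset hBU (htV.trans hV), hcard⟩, ?_, ?_⟩
    · rw [Finset.union_sdiff_distrib, Finset.sdiff_eq_self_of_disjoint hBV,
        Finset.sdiff_eq_empty_iff_subset.mpr htV, Finset.union_empty]
    · rw [Finset.union_inter_distrib_right,
        Finset.disjoint_iff_inter_eq_empty.mp hBV,
        Finset.inter_eq_left.mpr htV, Finset.empty_union]
  -- card of the conditioning event
  have hcardA : ((U.powersetCard n).filter (fun s => s \ V = B)).card
      = V.card.choose k := by
    rw [← Finset.card_powersetCard k V]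
    apply Finset.card_bij' (fun s _ => s ∩ V) (fun t _ => B ∪ t)
    · intro s hs
      rw [Finset.mem_filter, Finset.mem_powersetCard] at hs
      obtain ⟨⟨hsU, hsn⟩, hsV⟩ := hs
      rw [Finset.mem_powersetCard]
      refine ⟨Finset.inter_subset_right, ?_⟩
      have := Finset.card_sdiff_add_card_inter s V
      rw [hsV, hsn] at this
      omega
    · intro t ht
      rw [Finset.mem_powersetCard] at ht
      obtain ⟨h1, h2, _⟩ := hmem t ht.1 ht.2
      rw [Finset.mem_filter]
      exact ⟨h1, h2⟩
    · intro s hs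
      rw [Finset.mem_filter] at hs
      rw [← hs.2, Finset.sdiff_union_inter]
    · intro t ht
      rw [Finset.mem_powersetCard] at ht
      exact (hmem t ht.1 ht.2).2.2
  have hpos : 0 < V.card.choose k := Nat.choose_pos hnB
  constructor
  · rw [hcardA]; exact hpos
  · intro t htV htk
    have hsingle : ((U.powersetCard n).filter (fun s => s \ V = B ∧ s ∩ V = t)) = {B ∪ t} := by
      ext s
      simp only [Finset.mem_filter, Finset.mem_singleton]
      constructor
      · rintro ⟨hs, h1, h2⟩
        rw [← Finset.sdiff_union_inter s V, h1, h2]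
      · rintro rfl
        obtain ⟨a, b, c⟩ := hmem t htV htk
        exact ⟨a, b, c⟩
    rw [hsingle, hcardA, Finset.card_singleton]
    rw [Nat.cast_one, one_div]
end

section
/- Let F be a finite set of size M partitioned into disjoint strata F_1, …, F_H with |F_h| = M_h ≥ 2 for each h. Let S_1, …, S_H be independent random subsets, where S_h is uniformly distributed over the size-m_h subsets of F_h (0 ≤ m_h ≤ M_h), let π_1, …, π_H ∈ (0,1) be constants, and let (a_i)_{i∈F} be real numbers. Define D = (1/M) Σ_{h=1}^H Σ_{i∈F_h} ( 1_{i∈S_h}/π_h − 1 ) a_i. Then E[D²] ≤ (1/M) · [ Σ_{h=1}^H m_h/(π_h² (M_h − 1)) + Σ_{h=1}^H (m_h − π_h M_h)²/(π_h² M_h) ] · (1/M) Σ_{i∈F} a_i². -/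
/-!
Write `D` as `M⁻¹ ∑_h X_h(S_h)` where `X_h(s) = (∑_{i ∈ s} a_i) / π_h - ∑_{i ∈ F_h} a_i` is the
Horvitz–Thompson error of stratum `h`. The strata are sampled independently, so
`E[(∑_h X_h)²] = ∑_h Var X_h + (∑_h E X_h)²`. From the inclusion frequencies of one and of two
units under simple random sampling, `E X_h = (m_h - π_h M_h) / (π_h M_h) · ∑_{F_h} a_i`, and
`Var X_h = π_h⁻² Var(∑_{i ∈ S_h} a_i) ≤ m_h / (π_h² (M_h - 1)) · ∑_{F_h} a_i²`. The squared sum of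
the means is bounded by Cauchy–Schwarz across strata, combined with
`(∑_{F_h} a_i)² ≤ M_h ∑_{F_h} a_i²` within each stratum.
-/

open scoped BigOperators

namespace Finset

variable {α : Type*} [DecidableEq α]

theorem card_filter_mem_and_powersetCard_succ {G : Finset α} {i : α} (hi : i ∈ G) (m : ℕ)
    (p : Finset α → Prop) [DecidablePred p] :
    #{s ∈ G.powersetCard (m + 1) | i ∈ s ∧ p s} =
      #{t ∈ (G.erase i).powersetCard m | p (insert i t)} := by
  apply card_nbij' (·.erase i) (insert i)
  · intro s hs
    simp only [mem_coe, mem_filter, mem_powersetCard] at hs ⊢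
    obtain ⟨⟨hsG, hcard⟩, his, hp⟩ := hs
    refine ⟨⟨erase_subset_erase i hsG, by rw [card_erase_of_mem his, hcard]; rfl⟩, ?_⟩
    rwa [insert_erase his]
  · intro t ht
    simp only [mem_coe, mem_filter, mem_powersetCard, subset_erase] at ht ⊢
    obtain ⟨⟨⟨htG, hit⟩, hcard⟩, hp⟩ := ht
    exact ⟨⟨insert_subset hi htG, by rw [card_insert_of_notMem hit, hcard]⟩,
      mem_insert_self i t, hp⟩
  · intro s hs
    simp only [mem_coe, mem_filter] at hs
    exact insert_erase hs.2.1
  · intro t ht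
    simp only [mem_coe, mem_filter, mem_powersetCard, subset_erase] at ht
    exact erase_insert ht.1.1.2

theorem sum_eq_sum_boole_mul {R : Type*} [NonAssocSemiring R] {G s : Finset α} (hs : s ⊆ G)
    (a : α → R) : ∑ i ∈ s, a i = ∑ i ∈ G, (if i ∈ s then (1 : R) else 0) * a i := by
  simp only [ite_mul, one_mul, zero_mul, sum_ite_mem, inter_eq_right.2 hs]

variable {K : Type*} [Field K] [CharZero K]

theorem expect_sq_sub_sq_expect_mul_add {ι : Type*} {s : Finset ι} (hs : s.Nonempty)
    (f : ι → K) (c d : K) :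
    𝔼 i ∈ s, (c * f i + d) ^ 2 - (𝔼 i ∈ s, (c * f i + d)) ^ 2 =
      c ^ 2 * (𝔼 i ∈ s, f i ^ 2 - (𝔼 i ∈ s, f i) ^ 2) := by
  simp only [add_sq, mul_pow, expect_add_distrib, ← mul_expect, expect_const hs, mul_assoc,
    ← expect_mul]
  ring

theorem expect_boole_mem_and_powersetCard_succ {G : Finset α} {i : α} (hi : i ∈ G) {m : ℕ}
    (hm : m + 1 ≤ #G) (p : Finset α → Prop) [DecidablePred p] :
    𝔼 s ∈ G.powersetCard (m + 1), (if i ∈ s ∧ p s then (1 : K) else 0) =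
      (m + 1) / #G * 𝔼 t ∈ (G.erase i).powersetCard m, (if p (insert i t) then (1 : K) else 0) := by
  have hG : (#G : K) ≠ 0 := by norm_cast; omega
  have hchoose : ((#G).choose (m + 1) : K) ≠ 0 := by
    norm_cast; exact (Nat.choose_pos hm).ne'
  have hchoose' : ((#G - 1).choose m : K) ≠ 0 := by
    norm_cast; exact (Nat.choose_pos (by omega)).ne'
  have hcount : (#G * (#G - 1).choose m : K) = (#G).choose (m + 1) * (m + 1) := by
    have h := Nat.add_one_mul_choose_eq (#G - 1) m
    rw [Nat.sub_add_cancel (by omega)] at h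
    exact_mod_cast h
  simp only [expect_eq_sum_div_card, sum_boole, card_powersetCard, card_erase_of_mem hi,
    card_filter_mem_and_powersetCard_succ hi]
  field_simp
  linear_combination (#{t ∈ (G.erase i).powersetCard m | p (insert i t)} : K) * hcount

theorem expect_boole_mem_powersetCard {G : Finset α} {i : α} (hi : i ∈ G) {m : ℕ}
    (hm : m ≤ #G) :
    𝔼 s ∈ G.powersetCard m, (if i ∈ s then (1 : K) else 0) = m / #G := by
  cases m with
  | zero => simp
  | succ m =>
    have h := expect_boole_mem_and_powersetCard_succ (K := K) hi hm (fun _ => True)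
    simp only [and_true, if_true] at h
    rw [h, expect_const (powersetCard_nonempty.2 (by rw [card_erase_of_mem hi]; omega))]
    push_cast
    ring

theorem expect_boole_mem_and_mem_powersetCard {G : Finset α} {i j : α} (hi : i ∈ G)
    (hj : j ∈ G) (hij : i ≠ j) {m : ℕ} (hm : m ≤ #G) :
    𝔼 s ∈ G.powersetCard m, (if i ∈ s ∧ j ∈ s then (1 : K) else 0) =
      m / #G * ((m - 1) / (#G - 1)) := by
  cases m with
  | zero => simp
  | succ m =>
    rw [expect_boole_mem_and_powersetCard_succ hi hm]
    simp only [mem_insert, hij.symm, false_or]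
    rw [expect_boole_mem_powersetCard (mem_erase.2 ⟨hij.symm, hj⟩)
        (by rw [card_erase_of_mem hi]; omega),
      card_erase_of_mem hi, Nat.cast_sub (by omega)]
    push_cast
    ring

theorem expect_sum_powersetCard {G : Finset α} {m : ℕ} (hm : m ≤ #G) (a : α → K) :
    𝔼 s ∈ G.powersetCard m, ∑ i ∈ s, a i = m / #G * ∑ i ∈ G, a i := by
  rw [expect_congr rfl fun s hs => sum_eq_sum_boole_mul (mem_powersetCard.1 hs).1 a,
    expect_sum_comm, mul_sum]
  refine sum_congr rfl fun i hi => ?_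
  rw [← expect_mul, expect_boole_mem_powersetCard hi hm]

theorem expect_sq_sum_powersetCard {G : Finset α} {m : ℕ} (hm : m ≤ #G) (a : α → K) :
    𝔼 s ∈ G.powersetCard m, (∑ i ∈ s, a i) ^ 2 =
      m / #G * ∑ i ∈ G, a i ^ 2 +
        m / #G * ((m - 1) / (#G - 1)) * ((∑ i ∈ G, a i) ^ 2 - ∑ i ∈ G, a i ^ 2) := by
  set q : K := m / #G * ((m - 1) / (#G - 1))
  have hpair : ∀ i ∈ G, ∀ j ∈ G,
      𝔼 s ∈ G.powersetCard m, (if i ∈ s then (1 : K) else 0) * (if j ∈ s then 1 else 0) =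
        q + if i = j then m / #G - q else 0 := by
    intro i hi j hj
    simp_rw [ite_zero_mul_ite_zero, mul_one]
    by_cases hij : i = j
    · subst hij
      simp only [and_self, if_true, add_sub_cancel, expect_boole_mem_powersetCard hi hm]
    · rw [expect_boole_mem_and_mem_powersetCard hi hj hij hm, if_neg hij, add_zero]
  have hsq : ∀ s ∈ G.powersetCard m, (∑ i ∈ s, a i) ^ 2 =
      ∑ i ∈ G, ∑ j ∈ G,
        (if i ∈ s then (1 : K) else 0) * (if j ∈ s then 1 else 0) * (a i * a j) := by
    intro s hs
    rw [sum_eq_sum_boole_mul (mem_powersetCard.1 hs).1 a, sq, sum_mul_sum]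
    exact sum_congr rfl fun i _ => sum_congr rfl fun j _ => by ring
  rw [expect_congr rfl hsq, expect_sum_comm]
  simp_rw [expect_sum_comm, ← expect_mul]
  rw [sum_congr rfl fun i hi => sum_congr rfl fun j hj => by rw [hpair i hi j hj]]
  simp only [add_mul, sum_add_distrib, ite_mul, zero_mul, sum_ite_eq, sum_ite_mem, inter_self,
    ← mul_sum, sq, sum_mul_sum]
  ring

theorem expect_sq_sum_sub_sq_expect_sum_powersetCard {G : Finset α} {m : ℕ} (hm : m ≤ #G)
    (hG : 2 ≤ #G) (a : α → K) :
    𝔼 s ∈ G.powersetCard m, (∑ i ∈ s, a i) ^ 2 - (𝔼 s ∈ G.powersetCard m, ∑ i ∈ s, a i) ^ 2 =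
      m * (#G - m) / (#G * (#G - 1)) * (∑ i ∈ G, a i ^ 2 - (∑ i ∈ G, a i) ^ 2 / #G) := by
  have hG0 : (#G : K) ≠ 0 := by norm_cast; omega
  have hG1 : (#G : K) - 1 ≠ 0 := by
    rw [sub_ne_zero]; norm_cast; omega
  rw [expect_sq_sum_powersetCard hm, expect_sum_powersetCard hm]
  field_simp
  ring

end Finset

namespace Fintype

variable {ι : Type*} [Fintype ι] [DecidableEq ι] {κ : ι → Type*}

theorem expect_piFinset_prod {K : Type*} [Semifield K] [CharZero K] (t : ∀ i, Finset (κ i))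
    (f : ∀ i, κ i → K) :
    𝔼 σ ∈ piFinset t, ∏ i, f i (σ i) = ∏ i, 𝔼 x ∈ t i, f i x := by
  rw [Finset.expect_eq_sum_div_card, ← Finset.prod_univ_sum, card_piFinset, Nat.cast_prod,
    ← Finset.prod_div_distrib]
  simp only [Finset.expect_eq_sum_div_card]

variable {K : Type*} [Field K] [CharZero K] {t : ∀ i, Finset (κ i)}

theorem expect_piFinset_apply (ht : ∀ i, (t i).Nonempty) (j : ι) (f : κ j → K) :
    𝔼 σ ∈ piFinset t, f (σ j) = 𝔼 x ∈ t j, f x := by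
  set F := Pi.mulSingle (M := fun i => κ i → K) j f
  have hF : ∀ i ≠ j, F i = 1 := fun i hij => Pi.mulSingle_eq_of_ne (M := fun i => κ i → K) hij f
  have hFj : F j = f := Pi.mulSingle_eq_same (M := fun i => κ i → K) j f
  have hprod : ∀ σ : ∀ i, κ i, f (σ j) = ∏ i, F i (σ i) := fun σ => by
    rw [prod_eq_single j fun i hij => by rw [hF i hij, Pi.one_apply], hFj]
  rw [Finset.expect_congr rfl fun σ _ => hprod σ, expect_piFinset_prod,
    prod_eq_single j fun i hij => by rw [hF i hij]; exact Finset.expect_const (ht i) 1, hFj]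

theorem expect_piFinset_mul_apply (ht : ∀ i, (t i).Nonempty) {j k : ι} (hjk : j ≠ k)
    (f : κ j → K) (g : κ k → K) :
    𝔼 σ ∈ piFinset t, f (σ j) * g (σ k) = (𝔼 x ∈ t j, f x) * 𝔼 x ∈ t k, g x := by
  set F := Pi.mulSingle (M := fun i => κ i → K) j f
  set G := Pi.mulSingle (M := fun i => κ i → K) k g
  have hF : ∀ i ≠ j, F i = 1 := fun i hij => Pi.mulSingle_eq_of_ne (M := fun i => κ i → K) hij f
  have hG : ∀ i ≠ k, G i = 1 := fun i hik => Pi.mulSingle_eq_of_ne (M := fun i => κ i → K) hik g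
  have hFj : F j = f := Pi.mulSingle_eq_same (M := fun i => κ i → K) j f
  have hGk : G k = g := Pi.mulSingle_eq_same (M := fun i => κ i → K) k g
  have hprod : ∀ σ : ∀ i, κ i, f (σ j) * g (σ k) = ∏ i, F i (σ i) * G i (σ i) := fun σ => by
    rw [prod_eq_mul j k hjk fun i hi => by rw [hF i hi.1, hG i hi.2, Pi.one_apply, one_mul],
      hG j hjk, hF k hjk.symm, hFj, hGk, Pi.one_apply, Pi.one_apply, mul_one, one_mul]
  rw [Finset.expect_congr rfl fun σ _ => hprod σ,
    expect_piFinset_prod t fun i x => F i x * G i x,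
    prod_eq_mul j k hjk fun i hi => by
      simp only [hF i hi.1, hG i hi.2, Pi.one_apply, one_mul, Finset.expect_const (ht i)],
    hG j hjk, hF k hjk.symm, hFj, hGk]
  simp only [Pi.one_apply, mul_one, one_mul]

theorem expect_piFinset_sq_sum (ht : ∀ i, (t i).Nonempty) (X : ∀ i, κ i → K) :
    𝔼 σ ∈ piFinset t, (∑ i, X i (σ i)) ^ 2 =
      ∑ i, (𝔼 x ∈ t i, X i x ^ 2 - (𝔼 x ∈ t i, X i x) ^ 2) + (∑ i, 𝔼 x ∈ t i, X i x) ^ 2 := by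
  have hpair : ∀ i j, 𝔼 σ ∈ piFinset t, X i (σ i) * X j (σ j) =
      (𝔼 x ∈ t i, X i x) * (𝔼 x ∈ t j, X j x) +
        if i = j then 𝔼 x ∈ t i, X i x ^ 2 - (𝔼 x ∈ t i, X i x) ^ 2 else 0 := by
    intro i j
    by_cases hij : i = j
    · subst hij
      simp only [if_true, ← sq, expect_piFinset_apply ht i fun x => X i x ^ 2]
      ring
    · rw [expect_piFinset_mul_apply ht hij, if_neg hij, add_zero]
  simp only [sq, Finset.sum_mul_sum, Finset.expect_sum_comm, hpair, Finset.sum_add_distrib,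
    sum_ite_eq]
  ring

end Fintype

open Finset

theorem sq_sum_mul_sum_le {ι α R : Type*} [CommSemiring R] [LinearOrder R] [IsStrictOrderedRing R]
    [ExistsAddOfLE R] (s : Finset ι) (G : ι → Finset α) (c : ι → R) (a : α → R) :
    (∑ h ∈ s, c h * ∑ i ∈ G h, a i) ^ 2 ≤
      (∑ h ∈ s, c h ^ 2 * #(G h)) * ∑ h ∈ s, ∑ i ∈ G h, a i ^ 2 := by
  refine sum_sq_le_sum_mul_sum_of_sq_le_mul s
    (fun h _ => mul_nonneg (sq_nonneg _) (Nat.cast_nonneg _))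
    (fun h _ => sum_nonneg fun i _ => sq_nonneg _) fun h _ => ?_
  rw [mul_pow, mul_assoc]
  exact mul_le_mul_of_nonneg_left sq_sum_le_card_mul_sum_sq (sq_nonneg _)

section HorvitzThompson

variable {α : Type*} [DecidableEq α]

def htDeviation {K : Type*} [DivisionRing K] (G : Finset α) (p : K) (a : α → K) (s : Finset α) :
    K :=
  ∑ i ∈ G, ((if i ∈ s then 1 else 0) / p - 1) * a i

theorem htDeviation_eq {K : Type*} [Field K] {G s : Finset α} (hs : s ⊆ G) (p : K)
    (a : α → K) : htDeviation G p a s = p⁻¹ * ∑ i ∈ s, a i + -∑ i ∈ G, a i := by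
  rw [htDeviation, sum_eq_sum_boole_mul hs, mul_sum, ← sum_neg_distrib, ← sum_add_distrib]
  exact sum_congr rfl fun i _ => by ring

theorem expect_htDeviation {K : Type*} [Field K] [CharZero K] {G : Finset α} {m : ℕ}
    (hm : m ≤ #G) (hG : G.Nonempty) {p : K} (hp : p ≠ 0) (a : α → K) :
    𝔼 s ∈ G.powersetCard m, htDeviation G p a s = (m - p * #G) / (p * #G) * ∑ i ∈ G, a i := by
  have hG0 : (#G : K) ≠ 0 := by simpa using hG.ne_empty
  rw [expect_congr rfl fun s hs => htDeviation_eq (mem_powersetCard.1 hs).1 p a,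
    expect_add_distrib, ← mul_expect, expect_sum_powersetCard hm,
    expect_const (powersetCard_nonempty.2 hm)]
  field_simp
  ring

theorem expect_sq_htDeviation_sub_sq_le {G : Finset α} {m : ℕ} (hm : m ≤ #G) (hG : 2 ≤ #G)
    {p : ℝ} (hp : p ≠ 0) (a : α → ℝ) :
    𝔼 s ∈ G.powersetCard m, htDeviation G p a s ^ 2 -
        (𝔼 s ∈ G.powersetCard m, htDeviation G p a s) ^ 2 ≤
      m / (p ^ 2 * (#G - 1)) * ∑ i ∈ G, a i ^ 2 := by
  have hM : (2 : ℝ) ≤ #G := by exact_mod_cast hG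
  have hmM : (m : ℝ) ≤ #G := by exact_mod_cast hm
  have hX : ∀ s ∈ G.powersetCard m,
      htDeviation G p a s = p⁻¹ * ∑ i ∈ s, a i + -∑ i ∈ G, a i :=
    fun s hs => htDeviation_eq (mem_powersetCard.1 hs).1 p a
  have hCS : (∑ i ∈ G, a i) ^ 2 / #G ≤ ∑ i ∈ G, a i ^ 2 :=
    div_le_of_le_mul₀ (by positivity) (sum_nonneg fun i _ => sq_nonneg _)
      (sq_sum_le_card_mul_sum_sq.trans_eq (mul_comm _ _))
  have hshrink : (#G - m) / #G * (∑ i ∈ G, a i ^ 2 - (∑ i ∈ G, a i) ^ 2 / #G) ≤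
      ∑ i ∈ G, a i ^ 2 := by
    refine (mul_le_of_le_one_left (sub_nonneg.2 hCS) ?_).trans (sub_le_self _ (by positivity))
    rw [div_le_one (by positivity)]
    linarith
  rw [expect_congr rfl fun s hs => congrArg (· ^ 2) (hX s hs), expect_congr rfl hX,
    expect_sq_sub_sq_expect_mul_add (powersetCard_nonempty.2 hm),
    expect_sq_sum_sub_sq_expect_sum_powersetCard hm hG]
  have hM1 : (0 : ℝ) ≤ #G - 1 := by linarith
  calc p⁻¹ ^ 2 * (m * (#G - m) / (#G * (#G - 1)) *
          (∑ i ∈ G, a i ^ 2 - (∑ i ∈ G, a i) ^ 2 / #G))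
      = m / (p ^ 2 * (#G - 1)) *
          ((#G - m) / #G * (∑ i ∈ G, a i ^ 2 - (∑ i ∈ G, a i) ^ 2 / #G)) := by
        field_simp
    _ ≤ m / (p ^ 2 * (#G - 1)) * ∑ i ∈ G, a i ^ 2 := by gcongr

theorem sq_sum_expect_htDeviation_le {ι : Type*} [Fintype ι] (G : ι → Finset α) {m : ι → ℕ}
    (hm : ∀ h, m h ≤ #(G h)) (hG : ∀ h, (G h).Nonempty) {p : ι → ℝ} (hp : ∀ h, p h ≠ 0)
    (a : α → ℝ) :
    (∑ h, 𝔼 s ∈ (G h).powersetCard (m h), htDeviation (G h) (p h) a s) ^ 2 ≤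
      (∑ h, ((m h : ℝ) - p h * #(G h)) ^ 2 / (p h ^ 2 * #(G h))) *
        ∑ h, ∑ i ∈ G h, a i ^ 2 := by
  simp only [fun h => expect_htDeviation (hm h) (hG h) (hp h) a]
  refine (sq_sum_mul_sum_le univ G _ a).trans_eq (congrArg (· * _) (sum_congr rfl fun h _ => ?_))
  have hG0 : (#(G h) : ℝ) ≠ 0 := by simpa using (hG h).ne_empty
  have := hp h
  field_simp

theorem expect_sq_sum_htDeviation_le {ι : Type*} [Fintype ι] [DecidableEq ι]
    (G : ι → Finset α) {m : ι → ℕ} (hm : ∀ h, m h ≤ #(G h)) (hG : ∀ h, 2 ≤ #(G h))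
    {p : ι → ℝ} (hp : ∀ h, p h ≠ 0) (a : α → ℝ) :
    𝔼 σ ∈ Fintype.piFinset fun h => (G h).powersetCard (m h),
        (∑ h, htDeviation (G h) (p h) a (σ h)) ^ 2 ≤
      (∑ h, (m h : ℝ) / (p h ^ 2 * (#(G h) - 1)) +
          ∑ h, ((m h : ℝ) - p h * #(G h)) ^ 2 / (p h ^ 2 * #(G h))) *
        ∑ h, ∑ i ∈ G h, a i ^ 2 := by
  rw [Fintype.expect_piFinset_sq_sum (fun h => powersetCard_nonempty.2 (hm h)), add_mul, sum_mul]
  refine add_le_add (sum_le_sum fun h _ => ?_) <|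
    sq_sum_expect_htDeviation_le G hm (fun h => card_pos.1 (by have := hG h; omega)) hp a
  have hM1 : (0 : ℝ) ≤ #(G h) - 1 := by
    rw [sub_nonneg]; exact_mod_cast (hG h).trans' one_le_two
  refine (expect_sq_htDeviation_sub_sq_le (hm h) (hG h) (hp h) a).trans ?_
  gcongr
  exact single_le_sum (fun h _ => sum_nonneg fun i _ => sq_nonneg (a i)) (mem_univ h)

end HorvitzThompson

/-- Fold-wise fluctuation bound for stratified simple random sampling without
replacement: independent SRSWOR samples are drawn within each stratum, and the
second moment of the normalized HT fluctuation is bounded as in Proposition 2. -/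
theorem stratified_srswor_fluctuation_bound {ι : Type*} [DecidableEq ι]
    (H : ℕ) (F : Finset ι) (strata : Fin H → Finset ι)
    (hdisj : ∀ h h' : Fin H, h ≠ h' → Disjoint (strata h) (strata h'))
    (hcover : Finset.univ.biUnion strata = F)
    (hM : ∀ h, 2 ≤ (strata h).card)
    (msz : Fin H → ℕ) (hm : ∀ h, msz h ≤ (strata h).card)
    (π : Fin H → ℝ) (hπ : ∀ h, 0 < π h ∧ π h < 1)
    (a : ι → ℝ) :
    ((Fintype.piFinset (fun h => (strata h).powersetCard (msz h))).card : ℝ)⁻¹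
        * ∑ s ∈ Fintype.piFinset (fun h => (strata h).powersetCard (msz h)),
            ((F.card : ℝ)⁻¹
              * ∑ h, ∑ i ∈ strata h,
                  ((if i ∈ s h then (1 : ℝ) else 0) / π h - 1) * a i) ^ 2
      ≤ (F.card : ℝ)⁻¹
          * ((∑ h, (msz h : ℝ) / ((π h) ^ 2 * (((strata h).card : ℝ) - 1)))
              + ∑ h, ((msz h : ℝ) - π h * ((strata h).card : ℝ)) ^ 2
                  / ((π h) ^ 2 * ((strata h).card : ℝ)))
          * ((F.card : ℝ)⁻¹ * ∑ i ∈ F, (a i) ^ 2) := by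
  have hS : ∑ h, ∑ i ∈ strata h, a i ^ 2 = ∑ i ∈ F, a i ^ 2 := by
    rw [← hcover, sum_biUnion fun h _ h' _ => hdisj h h']
  rw [inv_mul_eq_div, ← expect_eq_sum_div_card]
  calc 𝔼 σ ∈ Fintype.piFinset fun h => (strata h).powersetCard (msz h),
        ((F.card : ℝ)⁻¹ * ∑ h, htDeviation (strata h) (π h) a (σ h)) ^ 2
      = (F.card : ℝ)⁻¹ ^ 2 * 𝔼 σ ∈ Fintype.piFinset fun h => (strata h).powersetCard (msz h),
          (∑ h, htDeviation (strata h) (π h) a (σ h)) ^ 2 := by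
        simp only [mul_pow, mul_expect]
    _ ≤ (F.card : ℝ)⁻¹ ^ 2 * ((∑ h, (msz h : ℝ) / ((π h) ^ 2 * (((strata h).card : ℝ) - 1)) +
          ∑ h, ((msz h : ℝ) - π h * ((strata h).card : ℝ)) ^ 2
            / ((π h) ^ 2 * ((strata h).card : ℝ))) * ∑ h, ∑ i ∈ strata h, a i ^ 2) := by
        gcongr
        exact expect_sq_sum_htDeviation_le strata hm hM (fun h => (hπ h).1.ne') a
    _ = _ := by
        rw [hS]
        ring
end

section
/- Let U be a finite set and let (X_i)_{i∈U} be independent Bernoulli random variables with P(X_i = 1) = p_i ∈ (0,1); set ω_i = p_i/(1 − p_i) and A = {i ∈ U : X_i = 1}. Then for every integer n with 0 ≤ n ≤ |U| and every subset s ⊆ U with |s| = n, P( A = s | |A| = n ) = ( Π_{i∈s} ω_i ) / ( Σ_{t⊆U, |t|=n} Π_{j∈t} ω_j ). -/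
/-!
By independence, the sample `A = {i | X i = 1}` equals a given `t` with probability
`∏_{i ∈ t} p i * ∏_{i ∉ t} (1 - p i) = (∏_{i ∈ t} p i / (1 - p i)) * ∏_i (1 - p i)`.
The last factor does not depend on `t`, so it cancels when `P(A = s)` is divided by
`P(|A| = n) = ∑_{|t| = n} P(A = t)`.
-/

open MeasureTheory ProbabilityTheory Finset
open scoped Classical

theorem Finset.prod_div_mul_prod_eq_prod_mul_prod_compl {ι K : Type*} [Fintype ι] [Field K]
    {f g : ι → K} (t : Finset ι) (hg : ∀ i ∈ t, g i ≠ 0) :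
    (∏ i ∈ t, f i / g i) * ∏ i, g i = (∏ i ∈ t, f i) * ∏ i ∈ tᶜ, g i := by
  rw [← prod_mul_prod_compl t g, ← mul_assoc, ← prod_mul_distrib]
  congr 1
  exact prod_congr rfl fun i hi => div_mul_cancel₀ _ (hg i hi)

theorem ProbabilityTheory.cond_preimage_singleton_eq_div {Ω α : Type*} [MeasurableSpace Ω]
    (μ : Measure Ω) {f : Ω → α} {S : Finset α}
    (hf : ∀ b ∈ S, MeasurableSet (f ⁻¹' {b}))
    {a : α} (ha : a ∈ S) :
    μ[f ⁻¹' {a} | f ⁻¹' S] = μ (f ⁻¹' {a}) / ∑ b ∈ S, μ (f ⁻¹' {b}) := by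
  have hsub : f ⁻¹' {a} ⊆ f ⁻¹' S := Set.preimage_mono (by simpa using ha)
  rw [cond_apply' (hf a ha), Set.inter_eq_right.2 hsub, sum_measure_preimage_singleton S hf,
    div_eq_mul_inv, mul_comm]

section RandomFinset

variable {Ω ι : Type*} {E : ι → Set Ω} {f : Ω → Finset ι}

theorem preimage_singleton_eq_iInter_ite (hf : ∀ ω i, i ∈ f ω ↔ ω ∈ E i)
    (t : Finset ι) :
    f ⁻¹' {t} = ⋂ i, if i ∈ t then E i else (E i)ᶜ := by
  ext ω
  simp only [Set.mem_preimage, Set.mem_singleton_iff, Set.mem_iInter, Finset.ext_iff, hf]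
  refine forall_congr' fun i => ?_
  split_ifs with hi <;> simp [hi]

theorem measurableSet_preimage_singleton_of_mem_iff [MeasurableSpace Ω] [Finite ι]
    (hf : ∀ ω i, i ∈ f ω ↔ ω ∈ E i) (hE : ∀ i, MeasurableSet (E i)) (t : Finset ι) :
    MeasurableSet (f ⁻¹' {t}) := by
  rw [preimage_singleton_eq_iInter_ite hf]
  refine MeasurableSet.iInter fun i => ?_
  split_ifs
  exacts [hE i, (hE i).compl]

theorem ProbabilityTheory.iIndep.measure_preimage_singleton_eq_prod [MeasurableSpace Ω]
    [Fintype ι] {m : ι → MeasurableSpace Ω} {μ : Measure Ω} (hμ : iIndep m μ)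
    (hE : ∀ i, MeasurableSet[m i] (E i)) (hf : ∀ ω i, i ∈ f ω ↔ ω ∈ E i)
    (t : Finset ι) :
    μ (f ⁻¹' {t}) = (∏ i ∈ t, μ (E i)) * ∏ i ∈ tᶜ, μ (E i)ᶜ := by
  rw [preimage_singleton_eq_iInter_ite hf, hμ.meas_iInter fun i => ?_]
  · rw [← prod_mul_prod_compl t]
    congr 1
    · exact prod_congr rfl fun i hi => by rw [if_pos hi]
    · exact prod_congr rfl fun i hi => by rw [if_neg (mem_compl.1 hi)]
  · split_ifs
    exacts [hE i, (hE i).compl]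

end RandomFinset

section Bernoulli

variable {Ω ι : Type*} [Fintype ι]

noncomputable def successSet (X : ι → Ω → ℝ) (ω : Ω) : Finset ι :=
  univ.filter fun i => X i ω = 1

theorem mem_successSet_iff {X : ι → Ω → ℝ} (ω : Ω) (i : ι) :
    i ∈ successSet X ω ↔ X i ω = 1 := by
  simp [successSet]

theorem measurableSet_successSet_preimage_singleton [MeasurableSpace Ω] {X : ι → Ω → ℝ}
    (hX : ∀ i, Measurable (X i)) (t : Finset ι) : MeasurableSet (successSet X ⁻¹' {t}) :=
  measurableSet_preimage_singleton_of_mem_iff (E := fun i => {ω | X i ω = 1})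
    mem_successSet_iff (fun i => hX i (measurableSet_singleton 1)) t

theorem measure_successSet_preimage_singleton [MeasurableSpace Ω] {P : Measure Ω}
    [IsProbabilityMeasure P] {X : ι → Ω → ℝ} {p : ι → ℝ} (hX : ∀ i, Measurable (X i))
    (hp₀ : ∀ i, 0 ≤ p i) (hp₁ : ∀ i, p i ≤ 1)
    (hPX : ∀ i, P {ω | X i ω = 1} = ENNReal.ofReal (p i))
    (hindep : iIndepFun X P) (t : Finset ι) :
    P (successSet X ⁻¹' {t}) =
      ENNReal.ofReal ((∏ i ∈ t, p i) * ∏ i ∈ tᶜ, (1 - p i)) := by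
  have hPXc : ∀ i, P {ω | X i ω = 1}ᶜ = ENNReal.ofReal (1 - p i) := fun i => by
    have hE : MeasurableSet {ω | X i ω = 1} := hX i (measurableSet_singleton 1)
    rw [prob_compl_eq_one_sub hE, hPX i, ENNReal.ofReal_sub 1 (hp₀ i), ENNReal.ofReal_one]
  rw [((iIndepFun_iff_iIndep _ _ _).1 hindep).measure_preimage_singleton_eq_prod
      (E := fun i => {ω | X i ω = 1}) (fun i => ⟨{1}, measurableSet_singleton 1, rfl⟩)
      mem_successSet_iff,
    prod_congr rfl fun i _ => hPX i, prod_congr rfl fun i _ => hPXc i,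
    ← ENNReal.ofReal_prod_of_nonneg fun i _ => hp₀ i,
    ← ENNReal.ofReal_prod_of_nonneg fun i _ => sub_nonneg.2 (hp₁ i),
    ← ENNReal.ofReal_mul (prod_nonneg fun i _ => hp₀ i)]

end Bernoulli

theorem bernoulli_cond_card_eq_rejective_general {Ω ι : Type*} [MeasurableSpace Ω]
    [Fintype ι]
    (P : Measure Ω) [IsProbabilityMeasure P]
    (X : ι → Ω → ℝ) (hXmeas : ∀ i, Measurable (X i))
    (p : ι → ℝ) (hp : ∀ i, 0 < p i ∧ p i < 1)
    (hPX : ∀ i, P {ω | X i ω = 1} = ENNReal.ofReal (p i))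
    (hindep : iIndepFun X P)
    (n : ℕ)
    (s : Finset ι) (hs : s.card = n) :
    ProbabilityTheory.cond P
        {ω | (Finset.univ.filter (fun i => X i ω = 1)).card = n}
        {ω | Finset.univ.filter (fun i => X i ω = 1) = s}
      = ENNReal.ofReal
          ((∏ i ∈ s, p i / (1 - p i))
            / ∑ t ∈ Finset.univ.powersetCard n, ∏ j ∈ t, p j / (1 - p j)) := by
  set w : Finset ι → ℝ := fun t => ∏ i ∈ t, p i / (1 - p i)
  set C : ℝ := ∏ i, (1 - p i)
  have hq : ∀ i, 0 < 1 - p i := fun i => sub_pos.2 (hp i).2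
  have hC : 0 < C := prod_pos fun i _ => hq i
  have hwC : ∀ t, 0 < w t * C := fun t =>
    mul_pos (prod_pos fun i _ => div_pos (hp i).1 (hq i)) hC
  have hPA : ∀ t, P (successSet X ⁻¹' {t}) = ENNReal.ofReal (w t * C) := fun t => by
    rw [measure_successSet_preimage_singleton hXmeas (fun i => (hp i).1.le)
      (fun i => (hp i).2.le) hPX hindep, prod_div_mul_prod_eq_prod_mul_prod_compl t
      fun i _ => (hq i).ne']
  have hcard : {ω | (successSet X ω).card = n} =
      successSet X ⁻¹' ↑(univ.powersetCard n : Finset (Finset ι)) := by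
    ext ω
    simp
  have hs' : s ∈ univ.powersetCard n := mem_powersetCard.2 ⟨subset_univ s, hs⟩
  change P[successSet X ⁻¹' {s} | {ω | (successSet X ω).card = n}] = _
  rw [hcard, cond_preimage_singleton_eq_div P
      (fun t _ => measurableSet_successSet_preimage_singleton hXmeas t) hs',
    hPA, sum_congr rfl fun t _ => hPA t, ← ENNReal.ofReal_sum_of_nonneg fun t _ => (hwC t).le,
    ← ENNReal.ofReal_div_of_pos (sum_pos (fun t _ => hwC t) ⟨s, hs'⟩), ← sum_mul,
    mul_div_mul_right _ _ hC.ne']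

/-- Conditioning independent Bernoulli draws with odds `ω_i = p_i/(1-p_i)` on
the total sample size equaling `n` yields the rejective (conditional Poisson)
distribution of fixed size `n`. -/
theorem bernoulli_cond_card_eq_rejective {Ω ι : Type*} [MeasurableSpace Ω]
    [Fintype ι]
    (P : Measure Ω) [IsProbabilityMeasure P]
    (X : ι → Ω → ℝ) (hXmeas : ∀ i, Measurable (X i))
    (hX01 : ∀ i ω, X i ω = 0 ∨ X i ω = 1)
    (p : ι → ℝ) (hp : ∀ i, 0 < p i ∧ p i < 1)
    (hPX : ∀ i, P {ω | X i ω = 1} = ENNReal.ofReal (p i))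
    (hindep : iIndepFun X P)
    (n : ℕ) (hn : n ≤ Fintype.card ι)
    (s : Finset ι) (hs : s.card = n) :
    ProbabilityTheory.cond P
        {ω | (Finset.univ.filter (fun i => X i ω = 1)).card = n}
        {ω | Finset.univ.filter (fun i => X i ω = 1) = s}
      = ENNReal.ofReal
          ((∏ i ∈ s, p i / (1 - p i))
            / ∑ t ∈ Finset.univ.powersetCard n, ∏ j ∈ t, p j / (1 - p j)) :=
  bernoulli_cond_card_eq_rejective_general P X hXmeas p hp hPX hindep n s hs
end

section
/- Let U be a finite set, ω_i > 0 for i ∈ U, and let A be a random subset of U with the rejective distribution of fixed size n: P(A = s) = ( Π_{i∈s} ω_i ) / ( Σ_{t⊆U,|t|=n} Π_{j∈t} ω_j ) for each s ⊆ U with |s| = n. Let V ⊆ U and B ⊆ U ∖ V with |B| ≤ n and n − |B| ≤ |V|. Then, conditionally on the event {A ∖ V = B} (which has positive probability), A ∩ V has the rejective distribution of fixed size n − |B| on V with the same odds weights; that is, for every t ⊆ V with |t| = n − |B|, P( A ∩ V = t | A ∖ V = B ) = ( Π_{i∈t} ω_i ) / ( Σ_{t'⊆V, |t'|=n−|B|}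 Π_{j∈t'} ω_j ). -/
open Finset

/-! Since `A = (A \ V) ∪ (A ∩ V)`, the samples with `A \ V = B` are exactly the sets `B ∪ t` with
`t ⊆ V` of size `n - #B`, and the weight of `B ∪ t` factors as `(∏ B w) * (∏ t w)`. Conditioning
divides out the common factor `∏ B w` together with the global normaliser, leaving the rejective
law on `V`. -/

namespace Finset

variable {ι : Type*}

theorem sum_powersetCard_prod_pos {R : Type*} [CommSemiring R] [PartialOrder R]
    [IsStrictOrderedRing R] {V : Finset ι} {k : ℕ} {w : ι → R} (hw : ∀ i ∈ V, 0 < w i)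
    (hk : k ≤ #V) : 0 < ∑ t ∈ V.powersetCard k, ∏ i ∈ t, w i := by
  obtain ⟨t, htV, htk⟩ := V.exists_subset_card_eq hk
  exact sum_pos (fun t ht => prod_pos fun i hi => hw i ((mem_powersetCard.1 ht).1 hi))
    ⟨t, mem_powersetCard.2 ⟨htV, htk⟩⟩

variable [DecidableEq ι]

theorem union_sdiff_eq_of_disjoint_of_subset {B t V : Finset ι} (hBV : Disjoint B V)
    (htV : t ⊆ V) : (B ∪ t) \ V = B := by
  rw [union_sdiff_distrib, sdiff_eq_self_of_disjoint hBV, sdiff_eq_empty_iff_subset.2 htV,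
    union_empty]

theorem union_inter_eq_of_disjoint_of_subset {B t V : Finset ι} (hBV : Disjoint B V)
    (htV : t ⊆ V) : (B ∪ t) ∩ V = t := by
  rw [union_inter_distrib_right, disjoint_iff_inter_eq_empty.1 hBV, inter_eq_left.2 htV,
    empty_union]

theorem filter_powersetCard_sdiff_eq {U V B : Finset ι} {n : ℕ} (hV : V ⊆ U) (hB : B ⊆ U \ V)
    (hBn : #B ≤ n) :
    (U.powersetCard n).filter (fun s => s \ V = B) = (V.powersetCard (n - #B)).image (B ∪ ·) := by
  have hBV : Disjoint B V := disjoint_of_subset_left hB sdiff_disjoint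
  ext s
  simp only [mem_filter, mem_powersetCard, mem_image]
  constructor
  · rintro ⟨⟨-, rfl⟩, rfl⟩
    refine ⟨s ∩ V, ⟨inter_subset_right, ?_⟩, sdiff_union_inter s V⟩
    rw [← card_sdiff_add_card_inter s V]
    omega
  · rintro ⟨t, ⟨htV, htn⟩, rfl⟩
    refine ⟨⟨union_subset (hB.trans sdiff_subset) (htV.trans hV), ?_⟩,
      union_sdiff_eq_of_disjoint_of_subset hBV htV⟩
    rw [card_union_of_disjoint (hBV.mono_right htV)]
    omega

theorem filter_powersetCard_sdiff_inter_eq {U V B t : Finset ι} {n : ℕ} (hV : V ⊆ U)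
    (hB : B ⊆ U \ V) (hBn : #B ≤ n) (htV : t ⊆ V) (htn : #t = n - #B) :
    (U.powersetCard n).filter (fun s => s \ V = B ∧ s ∩ V = t) = {B ∪ t} := by
  have hBV : Disjoint B V := disjoint_of_subset_left hB sdiff_disjoint
  have hmem : B ∪ t ∈ (U.powersetCard n).filter (fun s => s \ V = B) := by
    rw [filter_powersetCard_sdiff_eq hV hB hBn]
    exact mem_image_of_mem _ (mem_powersetCard.2 ⟨htV, htn⟩)
  ext s
  simp only [mem_filter, mem_singleton]
  constructor
  · rintro ⟨-, rfl, rfl⟩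
    exact (sdiff_union_inter s V).symm
  · rintro rfl
    exact ⟨(mem_filter.1 hmem).1, union_sdiff_eq_of_disjoint_of_subset hBV htV,
      union_inter_eq_of_disjoint_of_subset hBV htV⟩

theorem sum_filter_powersetCard_sdiff_eq {M : Type*} [AddCommMonoid M] {U V B : Finset ι}
    {n : ℕ} (hV : V ⊆ U) (hB : B ⊆ U \ V) (hBn : #B ≤ n) (f : Finset ι → M) :
    ∑ s ∈ (U.powersetCard n).filter (fun s => s \ V = B), f s
      = ∑ t ∈ V.powersetCard (n - #B), f (B ∪ t) := by
  have hBV : Disjoint B V := disjoint_of_subset_left hB sdiff_disjoint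
  rw [filter_powersetCard_sdiff_eq hV hB hBn, sum_image]
  intro t ht t' ht' h
  rw [← union_inter_eq_of_disjoint_of_subset hBV (mem_powersetCard.1 ht).1,
    ← union_inter_eq_of_disjoint_of_subset hBV (mem_powersetCard.1 ht').1]
  exact congrArg (· ∩ V) h

theorem sum_filter_powersetCard_sdiff_eq_prod_mul {R : Type*} [CommSemiring R]
    {U V B : Finset ι} {n : ℕ} (hV : V ⊆ U) (hB : B ⊆ U \ V) (hBn : #B ≤ n) (w : ι → R) :
    ∑ s ∈ (U.powersetCard n).filter (fun s => s \ V = B), ∏ i ∈ s, w i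
      = (∏ i ∈ B, w i) * ∑ t ∈ V.powersetCard (n - #B), ∏ i ∈ t, w i := by
  have hBV : Disjoint B V := disjoint_of_subset_left hB sdiff_disjoint
  rw [sum_filter_powersetCard_sdiff_eq hV hB hBn, mul_sum]
  exact sum_congr rfl fun t ht => prod_union (hBV.mono_right (mem_powersetCard.1 ht).1)

end Finset

theorem rejective_conditional_rejective_general {ι : Type*} [DecidableEq ι]
    (U : Finset ι) (w : ι → ℝ) (hw : ∀ i ∈ U, 0 < w i)
    (n : ℕ)
    (V : Finset ι) (hV : V ⊆ U)
    (B : Finset ι) (hB : B ⊆ U \ V) (hBn : B.card ≤ n)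
    (hnB : n - B.card ≤ V.card) :
    (0 < ∑ s ∈ (U.powersetCard n).filter (fun s => s \ V = B),
          (∏ i ∈ s, w i) / ∑ t ∈ U.powersetCard n, ∏ j ∈ t, w j)
    ∧ ∀ t ⊆ V, t.card = n - B.card →
        (∑ s ∈ (U.powersetCard n).filter (fun s => s \ V = B ∧ s ∩ V = t),
            (∏ i ∈ s, w i) / ∑ t' ∈ U.powersetCard n, ∏ j ∈ t', w j)
          / (∑ s ∈ (U.powersetCard n).filter (fun s => s \ V = B),
              (∏ i ∈ s, w i) / ∑ t' ∈ U.powersetCard n, ∏ j ∈ t', w j)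
        = (∏ i ∈ t, w i)
            / ∑ t' ∈ V.powersetCard (n - B.card), ∏ j ∈ t', w j := by
  have hBU : B ⊆ U := hB.trans sdiff_subset
  have hBV : Disjoint B V := disjoint_of_subset_left hB sdiff_disjoint
  have hn : n ≤ #U := by
    have := card_le_card (union_subset hBU hV)
    rw [card_union_of_disjoint hBV] at this
    omega
  have hZ := sum_powersetCard_prod_pos hw hn
  have hSV := sum_powersetCard_prod_pos (fun i hi => hw i (hV hi)) hnB
  have hwB : 0 < ∏ i ∈ B, w i := prod_pos fun i hi => hw i (hBU hi)
  refine ⟨?_, fun t htV htn => ?_⟩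
  · rw [← sum_div, sum_filter_powersetCard_sdiff_eq_prod_mul hV hB hBn]
    positivity
  · rw [filter_powersetCard_sdiff_inter_eq hV hB hBn htV htn, sum_singleton,
      prod_union (hBV.mono_right htV), ← sum_div,
      sum_filter_powersetCard_sdiff_eq_prod_mul hV hB hBn]
    field_simp

/-- Conditioning a rejective (conditional Poisson) sample of fixed size `n` on
its realization outside a fold `V` leaves a rejective sample of the remaining
size within `V`, with the same odds weights. -/
theorem rejective_conditional_rejective {ι : Type*} [DecidableEq ι]
    (U : Finset ι) (w : ι → ℝ) (hw : ∀ i ∈ U, 0 < w i)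
    (n : ℕ) (hn : n ≤ U.card)
    (V : Finset ι) (hV : V ⊆ U)
    (B : Finset ι) (hB : B ⊆ U \ V) (hBn : B.card ≤ n)
    (hnB : n - B.card ≤ V.card) :
    (0 < ∑ s ∈ (U.powersetCard n).filter (fun s => s \ V = B),
          (∏ i ∈ s, w i) / ∑ t ∈ U.powersetCard n, ∏ j ∈ t, w j)
    ∧ ∀ t ⊆ V, t.card = n - B.card →
        (∑ s ∈ (U.powersetCard n).filter (fun s => s \ V = B ∧ s ∩ V = t),
            (∏ i ∈ s, w i) / ∑ t' ∈ U.powersetCard n, ∏ j ∈ t', w j)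
          / (∑ s ∈ (U.powersetCard n).filter (fun s => s \ V = B),
              (∏ i ∈ s, w i) / ∑ t' ∈ U.powersetCard n, ∏ j ∈ t', w j)
        = (∏ i ∈ t, w i)
            / ∑ t' ∈ V.powersetCard (n - B.card), ∏ j ∈ t', w j :=
  rejective_conditional_rejective_general U w hw n V hV B hB hBn hnB
end

section
/- Let U be a finite set and let (I_i)_{i∈U} be {0,1}-valued random variables on a probability space with π_i = E[I_i] satisfying π_i ≥ π_min > 0 for all i, and π_{ij} = E[I_i I_j] (with π_{ii} = π_i). Define Δ_{ij} = π_{ij} − π_i π_j and suppose max_{i∈U} Σ_{j∈U} |Δ_{ij}| ≤ D for some constant D ≥ 0. Then for any real numbers (a_i)_{i∈U}, E[ ( Σ_{i∈U} (I_i/π_i − 1) a_i )² ] ≤ (D/π_min²) Σ_{i∈U} a_i². -/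
open MeasureTheory ProbabilityTheory Finset

/-!
Writing `I i / π i - 1 = (I i - π i) / π i`, the second moment of the fluctuation is the
quadratic form of the covariance matrix `Δ i j = ππ i j - π i * π j` at the vector `a i / π i`.
A symmetric quadratic form is bounded by `∑ i, x i ^ 2 * ∑ j, |Δ i j|` (from
`2 |x i x j| ≤ x i ^ 2 + x j ^ 2`), and the row sums are at most `D` while `π i ≥ πmin`.
-/

theorem sum_sum_mul_mul_le_sum_sq_mul_sum_abs {ι : Type*} (s : Finset ι) (x : ι → ℝ)
    (Δ : ι → ι → ℝ) (hΔ : ∀ i ∈ s, ∀ j ∈ s, Δ i j = Δ j i) :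
    ∑ i ∈ s, ∑ j ∈ s, x i * x j * Δ i j ≤ ∑ i ∈ s, x i ^ 2 * ∑ j ∈ s, |Δ i j| := by
  have hterm : ∀ i j, x i * x j * Δ i j ≤ (x i ^ 2 * |Δ i j| + x j ^ 2 * |Δ i j|) / 2 := by
    intro i j
    have hamgm := two_mul_le_add_sq |x i| |x j|
    calc x i * x j * Δ i j ≤ |x i| * |x j| * |Δ i j| := by
          rw [← abs_mul, ← abs_mul]; exact le_abs_self _
      _ ≤ (x i ^ 2 * |Δ i j| + x j ^ 2 * |Δ i j|) / 2 := by
          rw [sq_abs, sq_abs] at hamgm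
          nlinarith [abs_nonneg (Δ i j)]
  have hswap : ∑ i ∈ s, ∑ j ∈ s, x j ^ 2 * |Δ i j| = ∑ i ∈ s, ∑ j ∈ s, x i ^ 2 * |Δ i j| := by
    rw [sum_comm]
    exact sum_congr rfl fun i hi => sum_congr rfl fun j hj => by rw [hΔ j hj i hi]
  calc ∑ i ∈ s, ∑ j ∈ s, x i * x j * Δ i j
      ≤ ∑ i ∈ s, ∑ j ∈ s, (x i ^ 2 * |Δ i j| + x j ^ 2 * |Δ i j|) / 2 :=
        sum_le_sum fun i _ => sum_le_sum fun j _ => hterm i j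
    _ = ∑ i ∈ s, x i ^ 2 * ∑ j ∈ s, |Δ i j| := by
        simp only [← sum_div, sum_add_distrib, hswap, mul_sum]
        ring

theorem integral_sq_sum_mul_sub_integral {Ω ι : Type*} [MeasurableSpace Ω] {μ : Measure Ω}
    [IsProbabilityMeasure μ] {s : Finset ι} {X : ι → Ω → ℝ} (hX : ∀ i ∈ s, MemLp (X i) 2 μ)
    (c : ι → ℝ) :
    ∫ ω, (∑ i ∈ s, c i * (X i ω - μ[X i])) ^ 2 ∂μ
      = ∑ i ∈ s, ∑ j ∈ s, c i * c j * cov[X i, X j; μ] := by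
  set Y : ι → Ω → ℝ := fun i ω => c i * (X i ω - μ[X i])
  have hY : ∀ i ∈ s, MemLp (Y i) 2 μ := fun i hi =>
    ((hX i hi).sub (memLp_const _)).const_mul (c i)
  have hmean : μ[fun ω => ∑ i ∈ s, Y i ω] = 0 := by
    rw [integral_finsetSum s fun i hi => (hY i hi).integrable one_le_two]
    refine sum_eq_zero fun i hi => ?_
    simp [Y, integral_const_mul, integral_sub ((hX i hi).integrable one_le_two)]
  have hcov : ∀ i ∈ s, ∀ j ∈ s, cov[Y i, Y j; μ] = c i * c j * cov[X i, X j; μ] := by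
    intro i hi j hj
    rw [covariance_const_mul_left, covariance_const_mul_right,
      covariance_sub_const_left ((hX i hi).integrable one_le_two),
      covariance_sub_const_right ((hX j hj).integrable one_le_two)]
    ring
  calc ∫ ω, (∑ i ∈ s, Y i ω) ^ 2 ∂μ = Var[fun ω => ∑ i ∈ s, Y i ω; μ] := by
        rw [variance_eq_integral (memLp_finsetSum s hY).aemeasurable, hmean]
        simp
    _ = ∑ i ∈ s, ∑ j ∈ s, c i * c j * cov[X i, X j; μ] := by
        rw [variance_fun_sum' hY]
        exact sum_congr rfl fun i hi => sum_congr rfl fun j hj => hcov i hi j hj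

theorem memLp_of_forall_eq_zero_or_eq_one {Ω : Type*} [MeasurableSpace Ω] {μ : Measure Ω}
    [IsFiniteMeasure μ] {X : Ω → ℝ} (hX : Measurable X) (h01 : ∀ ω, X ω = 0 ∨ X ω = 1)
    (p : ENNReal) : MemLp X p μ :=
  .of_bound hX.aestronglyMeasurable 1 <| .of_forall fun ω => by
    rcases h01 ω with h | h <;> simp [h]

theorem ht_fluctuation_second_moment_bound_general {Ω ι : Type*} [MeasurableSpace Ω]
    (P : Measure Ω) [IsProbabilityMeasure P]
    (U : Finset ι)
    (I : ι → Ω → ℝ) (hImeas : ∀ i, Measurable (I i))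
    (hI01 : ∀ i ω, I i ω = 0 ∨ I i ω = 1)
    (π : ι → ℝ) (πmin : ℝ) (hπmin : 0 < πmin)
    (hπlo : ∀ i ∈ U, πmin ≤ π i)
    (hEI : ∀ i ∈ U, ∫ ω, I i ω ∂P = π i)
    (ππ : ι → ι → ℝ)
    (hππ : ∀ i ∈ U, ∀ j ∈ U, ∫ ω, I i ω * I j ω ∂P = ππ i j)
    (D : ℝ)
    (hrow : ∀ i ∈ U, ∑ j ∈ U, |ππ i j - π i * π j| ≤ D)
    (a : ι → ℝ) :
    ∫ ω, (∑ i ∈ U, (I i ω / π i - 1) * a i) ^ 2 ∂P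
      ≤ D / πmin ^ 2 * ∑ i ∈ U, (a i) ^ 2 := by
  have hπpos : ∀ i ∈ U, 0 < π i := fun i hi => hπmin.trans_le (hπlo i hi)
  have hmem : ∀ i ∈ U, MemLp (I i) 2 P := fun i _ =>
    memLp_of_forall_eq_zero_or_eq_one (hImeas i) (hI01 i) 2
  have hfluct : ∀ ω, ∑ i ∈ U, (I i ω / π i - 1) * a i
      = ∑ i ∈ U, a i / π i * (I i ω - P[I i]) := fun ω =>
    sum_congr rfl fun i hi => by
      rw [hEI i hi]; field_simp [(hπpos i hi).ne']
  have hcov : ∀ i ∈ U, ∀ j ∈ U, cov[I i, I j; P] = ππ i j - π i * π j := fun i hi j hj => by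
    rw [covariance_eq_sub (hmem i hi) (hmem j hj), ← hEI i hi, ← hEI j hj, ← hππ i hi j hj]
    rfl
  have hrow_cov : ∀ i ∈ U, ∑ j ∈ U, |cov[I i, I j; P]| ≤ D := fun i hi => by
    rw [sum_congr rfl fun j hj => by rw [hcov i hi j hj]]
    exact hrow i hi
  have hweight : ∀ i ∈ U, (a i / π i) ^ 2 ≤ a i ^ 2 / πmin ^ 2 := fun i hi => by
    rw [div_pow]
    gcongr
    exact hπlo i hi
  calc ∫ ω, (∑ i ∈ U, (I i ω / π i - 1) * a i) ^ 2 ∂P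
      = ∑ i ∈ U, ∑ j ∈ U, a i / π i * (a j / π j) * cov[I i, I j; P] := by
        simp_rw [hfluct]
        exact integral_sq_sum_mul_sub_integral hmem _
    _ ≤ ∑ i ∈ U, (a i / π i) ^ 2 * ∑ j ∈ U, |cov[I i, I j; P]| :=
        sum_sum_mul_mul_le_sum_sq_mul_sum_abs U _ _ fun i _ j _ => covariance_comm _ _
    _ ≤ ∑ i ∈ U, a i ^ 2 / πmin ^ 2 * D := sum_le_sum fun i hi =>
        mul_le_mul (hweight i hi) (hrow_cov i hi) (sum_nonneg fun _ _ => abs_nonneg _)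
          (by positivity)
    _ = D / πmin ^ 2 * ∑ i ∈ U, (a i) ^ 2 := by
        rw [mul_sum]
        exact sum_congr rfl fun i _ => by ring

/-- Unconditional Horvitz–Thompson fluctuation second-moment bound under
controlled second-order inclusion dependence. -/
theorem ht_fluctuation_second_moment_bound {Ω ι : Type*} [MeasurableSpace Ω]
    (P : Measure Ω) [IsProbabilityMeasure P]
    (U : Finset ι)
    (I : ι → Ω → ℝ) (hImeas : ∀ i, Measurable (I i))
    (hI01 : ∀ i ω, I i ω = 0 ∨ I i ω = 1)
    (π : ι → ℝ) (πmin : ℝ) (hπmin : 0 < πmin)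
    (hπlo : ∀ i ∈ U, πmin ≤ π i)
    (hEI : ∀ i ∈ U, ∫ ω, I i ω ∂P = π i)
    (ππ : ι → ι → ℝ)
    (hππ : ∀ i ∈ U, ∀ j ∈ U, ∫ ω, I i ω * I j ω ∂P = ππ i j)
    (D : ℝ) (hD : 0 ≤ D)
    (hrow : ∀ i ∈ U, ∑ j ∈ U, |ππ i j - π i * π j| ≤ D)
    (a : ι → ℝ) :
    ∫ ω, (∑ i ∈ U, (I i ω / π i - 1) * a i) ^ 2 ∂P
      ≤ D / πmin ^ 2 * ∑ i ∈ U, (a i) ^ 2 :=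
  ht_fluctuation_second_moment_bound_general P U I hImeas hI01 π πmin hπmin hπlo hEI ππ hππ D hrow a
end
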